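/- For every integer n ≥ 2, the function h_n(t) = t^{2n−3}·( −t²/(2n−2) + ((2n−1)/(4n−4))·t − 1/2 ) is strictly decreasing on the interval (0,1). -/

import Mathlib

/-!
Writing `a = 2n - 2`, the derivative of `h_n` is `t^{2n-4} · P(a, t) / (2a)` with
`P(a, t) = -2(a+1)t² + a(a+1)t - a(a-1)`. For `a ≥ 2` and `0 < t < 1` this quadratic is negative,
since with `s = a - 2` it equals
`-(6(t - 1/2)² + 1/2) - (1-t)·s·(3-2t) - (1-t)·s²`.
-/

/-- `h_n(t) = t^{2n-3}·(-t²/(2n-2) + ((2n-1)/(4n-4))·t - 1/2)`, the `t`-dependent term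
appearing in the evaluation of `g_n` at its critical points. -/
noncomputable def hFun (n : ℕ) (t : ℝ) : ℝ :=
  t ^ (2 * n - 3) *
    (-t ^ 2 / (2 * (n : ℝ) - 2) + ((2 * (n : ℝ) - 1) / (4 * (n : ℝ) - 4)) * t - 1 / 2)

def hFunDerivNum (a t : ℝ) : ℝ := -2 * (a + 1) * t ^ 2 + a * (a + 1) * t - a * (a - 1)

lemma hFunDerivNum_neg {a t : ℝ} (ha : 2 ≤ a) (ht : t ∈ Set.Ioo (0 : ℝ) 1) :
    hFunDerivNum a t < 0 := by
  have h1t : 0 < 1 - t := sub_pos.2 ht.2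
  rw [hFunDerivNum]
  nlinarith [mul_nonneg (mul_nonneg h1t.le (sub_nonneg.2 ha)) (by linarith : (0 : ℝ) ≤ 3 - 2 * t),
    mul_nonneg h1t.le (sq_nonneg (a - 2)), sq_nonneg (2 * t - 1)]

lemma hasDerivAt_hFun {n : ℕ} (hn : 2 ≤ n) (t : ℝ) :
    HasDerivAt (hFun n) (t ^ (2 * n - 4) * hFunDerivNum (2 * n - 2) t / (4 * n - 4)) t := by
  have hq : HasDerivAt (fun x : ℝ => -x ^ 2 / (2 * (n : ℝ) - 2) +
      ((2 * (n : ℝ) - 1) / (4 * (n : ℝ) - 4)) * x - 1 / 2)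
      (-(2 * t) / (2 * (n : ℝ) - 2) + (2 * (n : ℝ) - 1) / (4 * (n : ℝ) - 4)) t := by
    simpa using (((hasDerivAt_pow 2 t).neg.div_const (2 * (n : ℝ) - 2)).add
      ((hasDerivAt_id t).const_mul _)).sub_const (1 / 2 : ℝ)
  refine ((hasDerivAt_pow (2 * n - 3) t).mul hq).congr_deriv ?_
  have hn1 : (n : ℝ) - 1 ≠ 0 := by
    have : (2 : ℝ) ≤ n := by exact_mod_cast hn
    linarith
  rw [show 2 * n - 3 = 2 * n - 4 + 1 by omega, pow_succ, hFunDerivNum]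
  push_cast [Nat.cast_sub (by omega : 4 ≤ 2 * n)]
  field_simp
  ring

/-- For every integer `n ≥ 2`, the function `h_n` is strictly decreasing on `(0,1)`. -/
theorem hFun_strictAntiOn (n : ℕ) (hn : 2 ≤ n) :
    StrictAntiOn (hFun n) (Set.Ioo (0 : ℝ) 1) := by
  have hderiv := hasDerivAt_hFun hn
  have hn' : (2 : ℝ) ≤ n := by exact_mod_cast hn
  refine strictAntiOn_of_deriv_neg (convex_Ioo 0 1)
    (fun t _ => (hderiv t).continuousAt.continuousWithinAt) fun t ht => ?_
  rw [interior_Ioo] at ht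
  rw [(hderiv t).deriv]
  exact div_neg_of_neg_of_pos
    (mul_neg_of_pos_of_neg (pow_pos ht.1 _) (hFunDerivNum_neg (by linarith) ht)) (by linarith)
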